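/- Let f : ℝ → ℝ be twice differentiable with f''(ω) = f(ω)·f'(ω) for all ω, and let Ω = {(t,x,v) ∈ ℝ³ : v + t·f(x) ≠ 0}. Define on Ω: ξ(t,x,v) = −2/(v + t·f(x)) and θ(t,x,v) = f(x) − 2t·f'(x)/(v + t·f(x)) (so that θ = φ_t + φ_x ξ with φ = t·f(x)). Then the pair (ξ, θ) satisfies the determining system for reduction operators of the potential fast diffusion equation on Ω. (This verifies Case 3 with φ = t·f(x) of the classification theorem of non-Lie reduction operators.) -/

import Mathlib

/-- Partial derivative with respect to the first variable `t`. -/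
noncomputable def pt3 (f : ℝ × ℝ × ℝ → ℝ) (p : ℝ × ℝ × ℝ) : ℝ :=
  deriv (fun t => f (t, p.2.1, p.2.2)) p.1

/-- Partial derivative with respect to the second variable `x`. -/
noncomputable def px3 (f : ℝ × ℝ × ℝ → ℝ) (p : ℝ × ℝ × ℝ) : ℝ :=
  deriv (fun x => f (p.1, x, p.2.2)) p.2.1

/-- Partial derivative with respect to the third variable `v`. -/
noncomputable def pv3 (f : ℝ × ℝ × ℝ → ℝ) (p : ℝ × ℝ × ℝ) : ℝ :=
  deriv (fun v => f (p.1, p.2.1, v)) p.2.2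

/-- The determining system for reduction operators `Q = ∂_t + ξ∂_x + θ∂_v`
of the potential fast diffusion equation `v_t = v_xx / v_x`:
(i) `ξ_vv = ξ ξ_v`; (ii) `ξ_t = 2ξ_xv − θ_vv − θ_v ξ + θ ξ_v − ξ ξ_x`;
(iii) `θ_xx = θ θ_x`; (iv) `θ_t = 2θ_xv − ξ_xx − ξ_x θ + ξ θ_x − θ θ_v`. -/
def DeterminingSystem (ξ θ : ℝ × ℝ × ℝ → ℝ) (Ω : Set (ℝ × ℝ × ℝ)) : Prop :=
  ∀ p ∈ Ω,
    pv3 (pv3 ξ) p = ξ p * pv3 ξ p ∧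
    pt3 ξ p =
      2 * pv3 (px3 ξ) p - pv3 (pv3 θ) p - pv3 θ p * ξ p + θ p * pv3 ξ p - ξ p * px3 ξ p ∧
    px3 (px3 θ) p = θ p * px3 θ p ∧
    pt3 θ p =
      2 * pv3 (px3 θ) p - px3 (px3 ξ) p - px3 ξ p * θ p + ξ p * px3 θ p - θ p * pv3 θ p


/-! With `D = v + t f(x)`, all partial derivatives of `ξ = -2/D` and `θ = f(x) - 2t f'(x)/D` are
polynomials in `1/D` with coefficients in `t, f(x), f'(x)`: this is where `f'' = f f'` enters, as
it keeps `x`-derivatives inside this class. Second derivatives are computed by differentiating the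
closed forms of the first ones, which agree with them on the open set `D ≠ 0`. Each equation of
the determining system then becomes a rational identity in `t, f(x), f'(x), D`. -/

open Filter Topology

namespace PotentialFastDiffusion

variable {f : ℝ → ℝ} {p : ℝ × ℝ × ℝ}

def den (f : ℝ → ℝ) (p : ℝ × ℝ × ℝ) : ℝ := p.2.2 + p.1 * f p.2.1

noncomputable def xi (f : ℝ → ℝ) (p : ℝ × ℝ × ℝ) : ℝ := -2 / den f p

noncomputable def theta (f : ℝ → ℝ) (p : ℝ × ℝ × ℝ) : ℝ :=
  f p.2.1 - 2 * p.1 * deriv f p.2.1 / den f p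

theorem hasDerivAt_div_add_const (a c y : ℝ) (h : y + c ≠ 0) :
    HasDerivAt (fun y => a / (y + c)) (-a / (y + c) ^ 2) y :=
  ((hasDerivAt_const y a).div ((hasDerivAt_id y).add_const c) h).congr_deriv (by simp)

theorem hasDerivAt_div_add_const_sq (a c y : ℝ) (h : y + c ≠ 0) :
    HasDerivAt (fun y => a / (y + c) ^ 2) (-2 * a / (y + c) ^ 3) y :=
  ((hasDerivAt_const y a).div (((hasDerivAt_id y).add_const c).pow 2)
    (pow_ne_zero 2 h)).congr_deriv (by simp; field_simp)

theorem px3_congr {g h : ℝ × ℝ × ℝ → ℝ} (hgh : g =ᶠ[𝓝 p] h) : px3 g p = px3 h p :=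
  (hgh.comp_tendsto ((continuous_const.prodMk
    (continuous_id.prodMk continuous_const)).tendsto p.2.1)).deriv_eq

theorem pv3_congr {g h : ℝ × ℝ × ℝ → ℝ} (hgh : g =ᶠ[𝓝 p] h) : pv3 g p = pv3 h p :=
  (hgh.comp_tendsto ((continuous_const.prodMk
    (continuous_const.prodMk continuous_id)).tendsto p.2.2)).deriv_eq

theorem eventually_den_ne (hf : Continuous f) (hp : den f p ≠ 0) :
    ∀ᶠ q in 𝓝 p, den f q ≠ 0 := by
  have hden : Continuous (den f) :=
    continuous_snd.snd.add (continuous_fst.mul (hf.comp continuous_snd.fst))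
  exact hden.continuousAt.eventually_ne hp

theorem hasDerivAt_den_t (t x v : ℝ) : HasDerivAt (fun t => v + t * f x) (f x) t :=
  (hasDerivAt_mul_const (f x)).const_add v

theorem pt3_xi (hp : den f p ≠ 0) : pt3 (xi f) p = 2 * f p.2.1 / den f p ^ 2 := by
  obtain ⟨t, x, v⟩ := p
  show deriv (fun t => -2 / (v + t * f x)) t = 2 * f x / (v + t * f x) ^ 2
  have h : HasDerivAt (fun t => -2 / (v + t * f x)) _ t :=
    (hasDerivAt_const t (-2 : ℝ)).div (hasDerivAt_den_t t x v) hp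
  rw [h.deriv]
  ring

theorem pv3_xi (hp : den f p ≠ 0) : pv3 (xi f) p = 2 / den f p ^ 2 := by
  obtain ⟨t, x, v⟩ := p
  show deriv (fun v => -2 / (v + t * f x)) v = 2 / (v + t * f x) ^ 2
  rw [(hasDerivAt_div_add_const (-2) (t * f x) v hp).deriv]
  ring

theorem pt3_theta (hp : den f p ≠ 0) :
    pt3 (theta f) p = -2 * deriv f p.2.1 / den f p
      + 2 * p.1 * f p.2.1 * deriv f p.2.1 / den f p ^ 2 := by
  obtain ⟨t, x, v⟩ := p
  show deriv (fun t => f x - 2 * t * deriv f x / (v + t * f x)) t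
    = -2 * deriv f x / (v + t * f x) + 2 * t * f x * deriv f x / (v + t * f x) ^ 2
  have hnum : HasDerivAt (fun t => 2 * t * deriv f x) (2 * deriv f x) t := by
    simpa using ((hasDerivAt_id t).const_mul 2).mul_const (deriv f x)
  have h : HasDerivAt (fun t => f x - 2 * t * deriv f x / (v + t * f x)) _ t :=
    (hnum.div (hasDerivAt_den_t t x v) hp).const_sub (f x)
  rw [h.deriv]
  have hD : v + t * f x ≠ 0 := hp
  field_simp
  ring

theorem pv3_theta (hp : den f p ≠ 0) :
    pv3 (theta f) p = 2 * p.1 * deriv f p.2.1 / den f p ^ 2 := by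
  obtain ⟨t, x, v⟩ := p
  show deriv (fun v => f x - 2 * t * deriv f x / (v + t * f x)) v
    = 2 * t * deriv f x / (v + t * f x) ^ 2
  rw [((hasDerivAt_div_add_const (2 * t * deriv f x) (t * f x) v hp).const_sub (f x)).deriv]
  ring

theorem pv3_pv3_xi (hf : Continuous f) (hp : den f p ≠ 0) :
    pv3 (pv3 (xi f)) p = -4 / den f p ^ 3 := by
  rw [pv3_congr ((eventually_den_ne hf hp).mono fun q hq => pv3_xi hq)]
  obtain ⟨t, x, v⟩ := p
  show deriv (fun v => 2 / (v + t * f x) ^ 2) v = -4 / (v + t * f x) ^ 3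
  rw [(hasDerivAt_div_add_const_sq 2 (t * f x) v hp).deriv]
  ring

section

variable (hf : Differentiable ℝ f) (hf' : Differentiable ℝ (deriv f))
  (hode : ∀ ω, deriv (deriv f) ω = f ω * deriv f ω)

include hf in
theorem hasDerivAt_den_x (t x v : ℝ) :
    HasDerivAt (fun x => v + t * f x) (t * deriv f x) x :=
  ((hf x).hasDerivAt.const_mul t).const_add v

include hf' hode in
theorem hasDerivAt_deriv_of_ode (x : ℝ) : HasDerivAt (deriv f) (f x * deriv f x) x :=
  hode x ▸ (hf' x).hasDerivAt

include hf in
theorem px3_xi (hp : den f p ≠ 0) : px3 (xi f) p = 2 * p.1 * deriv f p.2.1 / den f p ^ 2 := by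
  obtain ⟨t, x, v⟩ := p
  show deriv (fun x => -2 / (v + t * f x)) x = 2 * t * deriv f x / (v + t * f x) ^ 2
  have h : HasDerivAt (fun x => -2 / (v + t * f x)) _ x :=
    (hasDerivAt_const x (-2 : ℝ)).div (hasDerivAt_den_x hf t x v) hp
  rw [h.deriv]
  ring

include hf hf' hode in
theorem px3_theta (hp : den f p ≠ 0) :
    px3 (theta f) p = deriv f p.2.1 - 2 * p.1 * (f p.2.1 * deriv f p.2.1) / den f p
      + 2 * p.1 ^ 2 * deriv f p.2.1 ^ 2 / den f p ^ 2 := by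
  obtain ⟨t, x, v⟩ := p
  show deriv (fun x => f x - 2 * t * deriv f x / (v + t * f x)) x
    = deriv f x - 2 * t * (f x * deriv f x) / (v + t * f x)
      + 2 * t ^ 2 * deriv f x ^ 2 / (v + t * f x) ^ 2
  have h : HasDerivAt (fun x => f x - 2 * t * deriv f x / (v + t * f x)) _ x :=
    (hf x).hasDerivAt.sub (((hasDerivAt_deriv_of_ode hf' hode x).const_mul (2 * t)).div
      (hasDerivAt_den_x hf t x v) hp)
  rw [h.deriv]
  have hD : v + t * f x ≠ 0 := hp
  field_simp
  ring

include hf in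
theorem pv3_px3_xi (hp : den f p ≠ 0) :
    pv3 (px3 (xi f)) p = -4 * p.1 * deriv f p.2.1 / den f p ^ 3 := by
  rw [pv3_congr ((eventually_den_ne hf.continuous hp).mono fun q hq => px3_xi hf hq)]
  obtain ⟨t, x, v⟩ := p
  show deriv (fun v => 2 * t * deriv f x / (v + t * f x) ^ 2) v
    = -4 * t * deriv f x / (v + t * f x) ^ 3
  rw [(hasDerivAt_div_add_const_sq (2 * t * deriv f x) (t * f x) v hp).deriv]
  ring

include hf in
theorem pv3_pv3_theta (hp : den f p ≠ 0) :
    pv3 (pv3 (theta f)) p = -4 * p.1 * deriv f p.2.1 / den f p ^ 3 := by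
  have h : pv3 (theta f) =ᶠ[𝓝 p] px3 (xi f) := (eventually_den_ne hf.continuous hp).mono
    fun q hq => (pv3_theta hq).trans (px3_xi hf hq).symm
  rw [pv3_congr h, pv3_px3_xi hf hp]

include hf hf' hode in
theorem px3_px3_xi (hp : den f p ≠ 0) :
    px3 (px3 (xi f)) p = 2 * p.1 * f p.2.1 * deriv f p.2.1 / den f p ^ 2
      - 4 * p.1 ^ 2 * deriv f p.2.1 ^ 2 / den f p ^ 3 := by
  rw [px3_congr ((eventually_den_ne hf.continuous hp).mono fun q hq => px3_xi hf hq)]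
  obtain ⟨t, x, v⟩ := p
  show deriv (fun x => 2 * t * deriv f x / (v + t * f x) ^ 2) x
    = 2 * t * f x * deriv f x / (v + t * f x) ^ 2
      - 4 * t ^ 2 * deriv f x ^ 2 / (v + t * f x) ^ 3
  have h : HasDerivAt (fun x => 2 * t * deriv f x / (v + t * f x) ^ 2) _ x :=
    ((hasDerivAt_deriv_of_ode hf' hode x).const_mul (2 * t)).div
      ((hasDerivAt_den_x hf t x v).pow 2) (pow_ne_zero 2 hp)
  rw [h.deriv]
  have hD : v + t * f x ≠ 0 := hp
  field_simp
  ring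

include hf hf' hode in
theorem pv3_px3_theta (hp : den f p ≠ 0) :
    pv3 (px3 (theta f)) p = 2 * p.1 * f p.2.1 * deriv f p.2.1 / den f p ^ 2
      - 4 * p.1 ^ 2 * deriv f p.2.1 ^ 2 / den f p ^ 3 := by
  rw [pv3_congr ((eventually_den_ne hf.continuous hp).mono
    fun q hq => px3_theta hf hf' hode hq)]
  obtain ⟨t, x, v⟩ := p
  show deriv (fun v => deriv f x - 2 * t * (f x * deriv f x) / (v + t * f x)
      + 2 * t ^ 2 * deriv f x ^ 2 / (v + t * f x) ^ 2) v
    = 2 * t * f x * deriv f x / (v + t * f x) ^ 2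
      - 4 * t ^ 2 * deriv f x ^ 2 / (v + t * f x) ^ 3
  have h : HasDerivAt (fun v => deriv f x - 2 * t * (f x * deriv f x) / (v + t * f x)
      + 2 * t ^ 2 * deriv f x ^ 2 / (v + t * f x) ^ 2) _ v :=
    ((hasDerivAt_div_add_const _ (t * f x) v hp).const_sub (deriv f x)).add
      (hasDerivAt_div_add_const_sq _ (t * f x) v hp)
  rw [h.deriv]
  ring

include hf hf' hode in
theorem px3_px3_theta (hp : den f p ≠ 0) :
    px3 (px3 (theta f)) p = f p.2.1 * deriv f p.2.1
      - 2 * p.1 * deriv f p.2.1 * (deriv f p.2.1 + f p.2.1 ^ 2) / den f p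
      + 6 * p.1 ^ 2 * f p.2.1 * deriv f p.2.1 ^ 2 / den f p ^ 2
      - 4 * p.1 ^ 3 * deriv f p.2.1 ^ 3 / den f p ^ 3 := by
  rw [px3_congr ((eventually_den_ne hf.continuous hp).mono
    fun q hq => px3_theta hf hf' hode hq)]
  obtain ⟨t, x, v⟩ := p
  show deriv (fun x => deriv f x - 2 * t * (f x * deriv f x) / (v + t * f x)
      + 2 * t ^ 2 * deriv f x ^ 2 / (v + t * f x) ^ 2) x
    = f x * deriv f x - 2 * t * deriv f x * (deriv f x + f x ^ 2) / (v + t * f x)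
      + 6 * t ^ 2 * f x * deriv f x ^ 2 / (v + t * f x) ^ 2
      - 4 * t ^ 3 * deriv f x ^ 3 / (v + t * f x) ^ 3
  have hf'' := hasDerivAt_deriv_of_ode hf' hode x
  have h : HasDerivAt (fun x => deriv f x - 2 * t * (f x * deriv f x) / (v + t * f x)
      + 2 * t ^ 2 * deriv f x ^ 2 / (v + t * f x) ^ 2) _ x :=
    (hf''.sub ((((hf x).hasDerivAt.mul hf'').const_mul (2 * t)).div
      (hasDerivAt_den_x hf t x v) hp)).add
      (((hf''.pow 2).const_mul (2 * t ^ 2)).div ((hasDerivAt_den_x hf t x v).pow 2)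
        (pow_ne_zero 2 hp))
  rw [h.deriv]
  have hD : v + t * f x ≠ 0 := hp
  simp only [Pi.mul_apply, Pi.pow_apply, Nat.cast_ofNat, Nat.reduceSub, pow_one]
  generalize v + t * f x = D at hD ⊢
  field_simp
  ring

end

end PotentialFastDiffusion

open PotentialFastDiffusion

theorem reduction_operator_case3_tf
    (f : ℝ → ℝ)
    (hf : ∀ ω : ℝ, DifferentiableAt ℝ f ω)
    (hf' : ∀ ω : ℝ, DifferentiableAt ℝ (deriv f) ω)
    (hode : ∀ ω : ℝ, deriv (deriv f) ω = f ω * deriv f ω) :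
    DeterminingSystem
      (fun p => -2 / (p.2.2 + p.1 * f p.2.1))
      (fun p => f p.2.1 - 2 * p.1 * deriv f p.2.1 / (p.2.2 + p.1 * f p.2.1))
      {p : ℝ × ℝ × ℝ | p.2.2 + p.1 * f p.2.1 ≠ 0} := by
  show DeterminingSystem (xi f) (theta f) {p | den f p ≠ 0}
  intro p (hp : den f p ≠ 0)
  rw [pv3_pv3_xi (Differentiable.continuous hf) hp, pv3_px3_xi hf hp, px3_px3_xi hf hf' hode hp,
    pv3_pv3_theta hf hp, pv3_px3_theta hf hf' hode hp, px3_px3_theta hf hf' hode hp,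
    pt3_xi hp, pv3_xi hp, px3_xi hf hp, pt3_theta hp, pv3_theta hp, px3_theta hf hf' hode hp]
  simp only [xi, theta]
  refine ⟨?_, ?_, ?_, ?_⟩ <;> field_simp <;> ring
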